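/- Let M ≥ 1, let R = ℂ[ψ₁,…,ψ_M], and let Ω = R ⊕ Rc̃ be the free R-module with basis {1, c̃} where c̃ is an odd square-zero generator; define d : Ω → Ω by d(ω₀ + c̃ω₁) = (Σ_{i=1}^{M} ψᵢ²)ω₁. Then d∘d = 0, and: (i) an element ω ∈ Ω satisfies dω = 0 if and only if ω = dρ + a₀ + ψ₁a₁ for some ρ ∈ Ω and some polynomials a₀, a₁ ∈ ℂ[ψ₂,…,ψ_M] (complex constants when M = 1); and (ii) if a₀ + ψ₁a₁ = dρ for some ρ ∈ Ω and a₀, a₁ ∈ ℂ[ψ₂,…,ψ_M], then a₀ = a₁ = 0. -/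

import Mathlib

/-!
Multiplication by `s = Σᵢψᵢ²` is injective, so `dω = 0` exactly when `ω` has no
`c̃`-component, and the cohomology is `R/(s)`. Over `A = ℂ[ψ₂,…,ψ_M]` the ring `R` is
`A[ψ₁]`, in which `s = ψ₁² + Σᵢ₌₂ψᵢ²` is monic of degree two; division with remainder
by `s` therefore gives each class the unique representative `a₀ + ψ₁a₁` with `a₀, a₁ ∈ A`.
-/

open MvPolynomial

noncomputable section

/-- The polynomial ring `ℂ[ψ₁,…,ψ_M]`. -/
abbrev R1 (M : ℕ) : Type := MvPolynomial (Fin M) ℂ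

/-- `Ω = R ⊕ Rc̃`: free `R1`-module with basis `{1, c̃}` (components 0, 1). -/
abbrev Om1 (M : ℕ) : Type := Fin 2 → R1 M

/-- The differential `d(ω₀ + c̃ω₁) = (Σᵢψᵢ²)ω₁`. -/
def d1 {M : ℕ} (ω : Om1 M) : Om1 M := ![(∑ i : Fin M, X i ^ 2) * ω 1, 0]

/-- Embedding of `R` into `Ω` (coefficient of the basis element `1`). -/
def ofR1 {M : ℕ} (r : R1 M) : Om1 M := ![r, 0]

/-- The subring `ℂ[ψ₂,…,ψ_M]` of `R1 M`. -/
def coefRing1 (M : ℕ) (hM : 1 ≤ M) : Subalgebra ℂ (R1 M) :=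
  MvPolynomial.supported ℂ {v : Fin M | v ≠ ⟨0, hM⟩}

namespace Polynomial

variable {A : Type*} [CommRing A] {g : A[X]}

theorem exists_eq_mul_add_C_add_X_mul_C (hg : g.Monic) (hdeg : g.natDegree = 2) (f : A[X]) :
    ∃ q b₀ b₁, f = g * q + (C b₀ + X * C b₁) := by
  have hr : (f %ₘ g).natDegree ≤ 1 := by
    have := natDegree_modByMonic_lt f hg (by rintro rfl; simp at hdeg)
    omega
  refine ⟨f /ₘ g, (f %ₘ g).coeff 0, (f %ₘ g).coeff 1, ?_⟩
  conv_lhs => rw [← modByMonic_add_div f g, eq_X_add_C_of_natDegree_le_one hr]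
  ring

theorem eq_zero_of_monic_dvd_C_add_X_mul_C (hg : g.Monic) (hdeg : g.natDegree = 2) {b₀ b₁ : A}
    (hdvd : g ∣ C b₀ + X * C b₁) : b₀ = 0 ∧ b₁ = 0 := by
  have hlin : C b₀ + X * C b₁ = 0 := by
    by_contra hne
    refine hg.not_dvd_of_natDegree_lt hne ?_ hdvd
    rw [hdeg, mul_comm, add_comm]
    exact natDegree_linear_le.trans_lt one_lt_two
  exact ⟨by simpa using congrArg (coeff · 0) hlin, by simpa using congrArg (coeff · 1) hlin⟩

end Polynomial

namespace MvPolynomial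

variable {R : Type*} [CommRing R] {n : ℕ}

theorem finSuccEquiv_rename_succ (b : MvPolynomial (Fin n) R) :
    finSuccEquiv R n (rename Fin.succ b) = Polynomial.C b := by
  induction b using MvPolynomial.induction_on with
  | C a => simp [finSuccEquiv_apply]
  | add p q hp hq => simp [hp, hq]
  | mul_X p j hp => simp [hp, finSuccEquiv_X_succ]

theorem mem_supported_ne_zero_iff {p : MvPolynomial (Fin (n + 1)) R} :
    p ∈ supported R {v | v ≠ 0} ↔ ∃ b, rename Fin.succ b = p := by
  constructor
  · intro hp
    have h0 : (finSuccEquiv R n p).natDegree = 0 := by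
      rw [natDegree_finSuccEquiv, ← not_ne_iff, ← mem_vars_iff_degreeOf_ne_zero]
      exact fun h => mem_supported.mp hp h rfl
    refine ⟨(finSuccEquiv R n p).coeff 0, (finSuccEquiv R n).injective ?_⟩
    rw [finSuccEquiv_rename_succ, ← Polynomial.eq_C_of_natDegree_eq_zero h0]
  · rintro ⟨b, rfl⟩
    refine mem_supported.mpr fun v hv => ?_
    obtain ⟨j, -, rfl⟩ := Finset.mem_image.mp (vars_rename _ _ hv)
    exact Fin.succ_ne_zero j

theorem sum_X_sq_fin_succ :
    ∑ i : Fin (n + 1), (X i : MvPolynomial (Fin (n + 1)) R) ^ 2 =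
      X 0 ^ 2 + rename Fin.succ (∑ j : Fin n, X j ^ 2) := by
  simp [Fin.sum_univ_succ, map_sum]

theorem sum_X_sq_ne_zero [CharZero R] {M : ℕ} (hM : 1 ≤ M) :
    ∑ i : Fin M, (X i : MvPolynomial (Fin M) R) ^ 2 ≠ 0 := by
  intro h
  have hM' : (M : R) = 0 := by simpa using congrArg (eval fun _ => (1 : R)) h
  exact absurd (Nat.cast_eq_zero.mp hM') (by omega)

variable [Nontrivial R]

theorem exists_eq_mul_add_rename_succ (c : MvPolynomial (Fin n) R)
    (p : MvPolynomial (Fin (n + 1)) R) :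
    ∃ q b₀ b₁, p = (X 0 ^ 2 + rename Fin.succ c) * q +
      (rename Fin.succ b₀ + X 0 * rename Fin.succ b₁) := by
  obtain ⟨q, b₀, b₁, h⟩ := Polynomial.exists_eq_mul_add_C_add_X_mul_C
    (Polynomial.monic_X_pow_add_C c two_ne_zero) Polynomial.natDegree_X_pow_add_C
    (finSuccEquiv R n p)
  refine ⟨(finSuccEquiv R n).symm q, b₀, b₁, (finSuccEquiv R n).injective ?_⟩
  simpa [finSuccEquiv_X_zero, finSuccEquiv_rename_succ] using h

theorem eq_zero_of_dvd_rename_succ_add (c : MvPolynomial (Fin n) R)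
    {b₀ b₁ : MvPolynomial (Fin n) R}
    (h : X 0 ^ 2 + rename Fin.succ c ∣ rename Fin.succ b₀ + X 0 * rename Fin.succ b₁) :
    b₀ = 0 ∧ b₁ = 0 := by
  refine Polynomial.eq_zero_of_monic_dvd_C_add_X_mul_C
    (Polynomial.monic_X_pow_add_C c two_ne_zero) Polynomial.natDegree_X_pow_add_C ?_
  simpa [finSuccEquiv_X_zero, finSuccEquiv_rename_succ] using map_dvd (finSuccEquiv R n) h

end MvPolynomial

theorem d1_d1 {M : ℕ} (ω : Om1 M) : d1 (d1 ω) = 0 := by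
  funext j
  fin_cases j <;> simp [d1]

theorem d1_eq_zero_iff {M : ℕ} (hM : 1 ≤ M) (ω : Om1 M) : d1 ω = 0 ↔ ω 1 = 0 := by
  simp [d1, funext_iff, Fin.forall_fin_two, sum_X_sq_ne_zero hM]

/-- for `M ≥ 1`, `d∘d = 0`, and (i) `dω = 0` iff
`ω = dρ + a₀ + ψ₁a₁` for some `ρ` and `a₀, a₁ ∈ ℂ[ψ₂,…,ψ_M]`;
(ii) if `a₀ + ψ₁a₁ = dρ` with `a₀, a₁ ∈ ℂ[ψ₂,…,ψ_M]` then `a₀ = a₁ = 0`. -/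
theorem stmt19 (M : ℕ) (hM : 1 ≤ M) :
    (∀ ω : Om1 M, d1 (d1 ω) = 0)
    ∧
    (∀ ω : Om1 M, d1 ω = 0 ↔
      ∃ ρ : Om1 M, ∃ a0 ∈ coefRing1 M hM, ∃ a1 ∈ coefRing1 M hM,
        ω = d1 ρ + ofR1 (a0 + X ⟨0, hM⟩ * a1))
    ∧
    (∀ a0 ∈ coefRing1 M hM, ∀ a1 ∈ coefRing1 M hM,
      (∃ ρ : Om1 M, ofR1 (a0 + X ⟨0, hM⟩ * a1) = d1 ρ) → a0 = 0 ∧ a1 = 0) := by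
  obtain ⟨m, rfl⟩ : ∃ m, M = m + 1 := ⟨M - 1, by omega⟩
  have hcoef (a : R1 (m + 1)) : a ∈ coefRing1 (m + 1) hM ↔ ∃ b, rename Fin.succ b = a :=
    mem_supported_ne_zero_iff
  refine ⟨d1_d1, fun ω => ?_, ?_⟩
  · rw [d1_eq_zero_iff hM]
    constructor
    · intro hω
      obtain ⟨q, b₀, b₁, h⟩ := exists_eq_mul_add_rename_succ (∑ j : Fin m, X j ^ 2) (ω 0)
      refine ⟨![0, q], _, (hcoef _).2 ⟨b₀, rfl⟩, _, (hcoef _).2 ⟨b₁, rfl⟩, ?_⟩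
      funext j
      fin_cases j
      · simp [d1, ofR1, sum_X_sq_fin_succ, h]
      · simp [d1, ofR1, hω]
    · rintro ⟨ρ, a₀, -, a₁, -, rfl⟩
      simp [d1, ofR1]
  · rintro a₀ ha₀ a₁ ha₁ ⟨ρ, hρ⟩
    obtain ⟨b₀, rfl⟩ := (hcoef a₀).1 ha₀
    obtain ⟨b₁, rfl⟩ := (hcoef a₁).1 ha₁
    obtain ⟨rfl, rfl⟩ := eq_zero_of_dvd_rename_succ_add (∑ j : Fin m, X j ^ 2)
      ⟨ρ 1, by simpa [d1, ofR1, sum_X_sq_fin_succ] using congrFun hρ 0⟩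
    simp
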